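/- arXiv:2412.19368 — 2 statements merged into one kernel-verified Lean document; each statement's English description precedes it below -/
import Mathlib

section
/- Let Δt > 0 and ξ, Π, A, B, Π′ ∈ ℝ³ satisfy one step of the rigid-body midpoint integrator: d⁺(Δt,ξ,A) = Π, d⁺(Δt,ξ,B) = d⁻(Δt,ξ,A), and Π′ = d⁻(Δt,ξ,B). Then the updated body momentum is the coadjoint update Π′ = cay(Δtξ̂)⁻¹ · cay(Δtξ̂)⁻¹ · Π. -/
open Matrix

noncomputable section

/-- The hat map: the 3×3 skew-symmetric matrix `ξ̂` with `ξ̂ v = ξ × v`. -/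
def hat (ξ : Fin 3 → ℝ) : Matrix (Fin 3) (Fin 3) ℝ :=
  !![0, -ξ 2, ξ 1; ξ 2, 0, -ξ 0; -ξ 1, ξ 0, 0]

/-- The Cayley transform `cay(hξ̂) = (I − (h/2)ξ̂)⁻¹ (I + (h/2)ξ̂)`. -/
def cay (h : ℝ) (ξ : Fin 3 → ℝ) : Matrix (Fin 3) (Fin 3) ℝ :=
  (1 - (h / 2) • hat ξ)⁻¹ * (1 + (h / 2) • hat ξ)

/-- `d⁺(h,ξ,Π) = Π + (h/2) ξ×Π − (h²/4)(ξ·Π)ξ`. -/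
def dplus (h : ℝ) (ξ Pv : Fin 3 → ℝ) : Fin 3 → ℝ :=
  Pv + (h / 2) • (ξ ⨯₃ Pv) - (h ^ 2 / 4 * (ξ ⬝ᵥ Pv)) • ξ

/-- `d⁻(h,ξ,Π) = Π − (h/2) ξ×Π − (h²/4)(ξ·Π)ξ`. -/
def dminus (h : ℝ) (ξ Pv : Fin 3 → ℝ) : Fin 3 → ℝ :=
  Pv - (h / 2) • (ξ ⨯₃ Pv) - (h ^ 2 / 4 * (ξ ⬝ᵥ Pv)) • ξ

/-!
Writing `s = Δt/2`, a vector triple product expansion gives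
`(1 - s ξ̂) d⁺(Δt,ξ,A) = (1 + s²|ξ|²) A - 2s² (ξ·A) ξ`, an expression even in `s`.
Since `d⁻(Δt,ξ,A) = d⁺(-Δt,ξ,A)`, it also equals `(1 + s ξ̂) d⁻(Δt,ξ,A)`, and as
`det (1 ± s ξ̂) = 1 + s²|ξ|² > 0` this says `d⁻(Δt,ξ,A) = cay(Δt ξ̂)⁻¹ d⁺(Δt,ξ,A)`.
Applying this to `A` and then to `B` gives the update.
-/

lemma hat_mulVec (ξ v : Fin 3 → ℝ) : hat ξ *ᵥ v = ξ ⨯₃ v := by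
  ext i
  fin_cases i <;> simp [hat, mulVec, cross_apply, dotProduct, Fin.sum_univ_three] <;> ring

lemma det_one_add_smul_hat (s : ℝ) (ξ : Fin 3 → ℝ) :
    (1 + s • hat ξ).det = 1 + s ^ 2 * (ξ ⬝ᵥ ξ) := by
  simp only [hat, Fin.isValue, smul_of, smul_cons, smul_eq_mul, mul_zero, mul_neg, smul_empty,
    det_fin_three, Matrix.add_apply, one_apply, ↓reduceIte, of_apply, cons_val', cons_val_zero,
    cons_val_fin_one, add_zero, cons_val_one, mul_one, cons_val, Fin.reduceEq, zero_add, one_mul,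
    neg_mul, sub_neg_eq_add, zero_ne_one, one_ne_zero, neg_neg, dotProduct, Fin.sum_univ_three]
  ring

lemma isUnit_det_one_add_smul_hat (s : ℝ) (ξ : Fin 3 → ℝ) : IsUnit (1 + s • hat ξ).det := by
  rw [det_one_add_smul_hat]
  have hξ : 0 ≤ ξ ⬝ᵥ ξ := dotProduct_self_star_nonneg ξ
  exact (by positivity : (0 : ℝ) < 1 + s ^ 2 * (ξ ⬝ᵥ ξ)).ne'.isUnit

lemma isUnit_det_one_sub_smul_hat (s : ℝ) (ξ : Fin 3 → ℝ) : IsUnit (1 - s • hat ξ).det := by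
  simpa [sub_eq_add_neg, ← neg_smul] using isUnit_det_one_add_smul_hat (-s) ξ

lemma cay_inv (h : ℝ) (ξ : Fin 3 → ℝ) :
    (cay h ξ)⁻¹ = (1 + (h / 2) • hat ξ)⁻¹ * (1 - (h / 2) • hat ξ) := by
  rw [cay, Matrix.mul_inv_rev, nonsing_inv_nonsing_inv _ (isUnit_det_one_sub_smul_hat _ ξ)]

lemma dminus_eq_dplus_neg (h : ℝ) (ξ A : Fin 3 → ℝ) : dminus h ξ A = dplus (-h) ξ A := by
  simp only [dminus, dplus, neg_div, neg_smul, neg_sq, sub_eq_add_neg]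

lemma one_sub_smul_hat_mulVec_dplus (h : ℝ) (ξ A : Fin 3 → ℝ) :
    (1 - (h / 2) • hat ξ) *ᵥ dplus h ξ A
      = (1 + h ^ 2 / 4 * (ξ ⬝ᵥ ξ)) • A - (h ^ 2 / 2 * (ξ ⬝ᵥ A)) • ξ := by
  simp only [sub_mulVec, one_mulVec, smul_mulVec, hat_mulVec, dplus, map_add, map_sub,
    map_smul, cross_self, cross_cross_eq_smul_sub_smul']
  module

lemma cay_inv_mulVec_dplus (h : ℝ) (ξ A : Fin 3 → ℝ) :
    (cay h ξ)⁻¹ *ᵥ dplus h ξ A = dminus h ξ A := by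
  have key : (1 - (h / 2) • hat ξ) *ᵥ dplus h ξ A = (1 + (h / 2) • hat ξ) *ᵥ dminus h ξ A := by
    have := one_sub_smul_hat_mulVec_dplus (-h) ξ A
    rw [neg_div, neg_smul, sub_neg_eq_add, neg_sq] at this
    rw [one_sub_smul_hat_mulVec_dplus, dminus_eq_dplus_neg, this]
  rw [cay_inv, ← mulVec_mulVec, key, mulVec_mulVec,
    nonsing_inv_mul _ (isUnit_det_one_add_smul_hat _ ξ), one_mulVec]

theorem midpoint_step_is_coadjoint_update_general
    (Δt : ℝ) (ξ Pv A B Pv' : Fin 3 → ℝ)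
    (h1 : dplus Δt ξ A = Pv)
    (h2 : dplus Δt ξ B = dminus Δt ξ A)
    (h3 : Pv' = dminus Δt ξ B) :
    Pv' = (cay Δt ξ)⁻¹.mulVec ((cay Δt ξ)⁻¹.mulVec Pv) := by
  rw [h3, ← h1, cay_inv_mulVec_dplus, ← h2, cay_inv_mulVec_dplus]

/-- One step of the rigid-body stochastic variational midpoint integrator is the coadjoint
update `Π′ = cay(Δtξ̂)⁻¹ · cay(Δtξ̂)⁻¹ · Π`. -/
theorem midpoint_step_is_coadjoint_update
    (Δt : ℝ) (hΔt : 0 < Δt) (ξ Pv A B Pv' : Fin 3 → ℝ)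
    (h1 : dplus Δt ξ A = Pv)
    (h2 : dplus Δt ξ B = dminus Δt ξ A)
    (h3 : Pv' = dminus Δt ξ B) :
    Pv' = (cay Δt ξ)⁻¹.mulVec ((cay Δt ξ)⁻¹.mulVec Pv) :=
  midpoint_step_is_coadjoint_update_general Δt ξ Pv A B Pv' h1 h2 h3
end
end

section
/- Consider a symmetric heavy top: 𝕀 = diag(I₁, I₁, I₃) with I₁, I₃ > 0, and displacement vector a = (0, 0, a₃) ∈ ℝ³ aligned with the third body axis. Let Δt > 0, m, g ∈ ℝ, Γ⁰, A, B ∈ ℝ³, and perform one step of the deterministic heavy-top midpoint integrator: set ξ := (1/2)𝕀⁻¹((A+B)/2), w := Δt·m·g·a, Γ̃ := cay(−Δtξ̂)Γ⁰, and suppose d⁻(Δt,ξ,A) − w × Γ̃ = d⁺(Δt,ξ,B); set Π⁰ := d⁺(Δt,ξ,A) and Π¹ := d⁻(Δt,ξ,B). Then the third component of the body angular momentum is exactly conserved: (Π¹)₃ = (Π⁰)₃. -/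
open Matrix

noncomputable section

/-!
Subtracting the two updates gives `Π⁰ − Π¹ = w × Γ̃ + Δt ξ × (A + B)`, since `d⁺ − d⁻ = Δt ξ × ·`.
Both cross products have vanishing third component: `w` points along the symmetry axis, and
`ξ = 𝕀⁻¹ (A + B) / 4` with `𝕀₁₁ = 𝕀₂₂`, so with `v = A + B`,
`(ξ × v)₃ = (I₁⁻¹ / 4) (v₁ v₂ − v₂ v₁) = 0`.
-/

theorem dplus_sub_dminus (h : ℝ) (ξ A B : Fin 3 → ℝ) :
    dplus h ξ A - dminus h ξ B = dminus h ξ A - dplus h ξ B + h • (ξ ⨯₃ (A + B)) := by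
  simp only [dplus, dminus, map_add]
  module

theorem cross_apply_two_eq_zero {R : Type*} [CommRing R] {u : Fin 3 → R} (v : Fin 3 → R)
    (h₀ : u 0 = 0) (h₁ : u 1 = 0) : (u ⨯₃ v) 2 = 0 := by
  simp [cross_apply, h₀, h₁]

theorem diagonal_mulVec_cross_self_apply_two {R : Type*} [CommRing R] {d : Fin 3 → R}
    (hd : d 0 = d 1) (v : Fin 3 → R) : ((diagonal d *ᵥ v) ⨯₃ v) 2 = 0 := by
  simp [cross_apply, mulVec_diagonal, hd]
  ring

theorem inv_diagonal_eq_diagonal_inv {n K : Type*} [Fintype n] [DecidableEq n] [Field K]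
    {v : n → K} (hv : ∀ i, v i ≠ 0) : (diagonal v)⁻¹ = diagonal v⁻¹ :=
  inv_eq_left_inv <| by
    rw [diagonal_mul_diagonal, ← diagonal_one]
    exact congrArg diagonal (funext fun i => inv_mul_cancel₀ (hv i))

theorem symmetric_heavy_top_conserves_third_momentum_general
    (I₁ I₃ : ℝ) (hI₁ : 0 < I₁) (hI₃ : 0 < I₃) (a₃ : ℝ)
    (Δt : ℝ) (m g : ℝ) (A B : Fin 3 → ℝ)
    (ξ w Γt Pv₀ Pv₁ : Fin 3 → ℝ)
    (hξ : ξ = (1 / 2 : ℝ) • (Matrix.diagonal ![I₁, I₁, I₃])⁻¹.mulVec ((1 / 2 : ℝ) • (A + B)))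
    (hw : w = (Δt * m * g) • (![0, 0, a₃] : Fin 3 → ℝ))
    (hAB : dminus Δt ξ A - w ⨯₃ Γt = dplus Δt ξ B)
    (hPv₀ : Pv₀ = dplus Δt ξ A)
    (hPv₁ : Pv₁ = dminus Δt ξ B) :
    Pv₁ 2 = Pv₀ 2 := by
  have hinv : (diagonal ![I₁, I₁, I₃])⁻¹ = diagonal ![I₁, I₁, I₃]⁻¹ :=
    inv_diagonal_eq_diagonal_inv fun i => by fin_cases i <;> simp [hI₁.ne', hI₃.ne']
  have hgyro : (ξ ⨯₃ (A + B)) 2 = 0 := by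
    rw [hξ, hinv, mulVec_smul, smul_smul, map_smul, LinearMap.smul_apply, Pi.smul_apply,
      diagonal_mulVec_cross_self_apply_two rfl, smul_zero]
  have htorque : (w ⨯₃ Γt) 2 = 0 := cross_apply_two_eq_zero Γt (by simp [hw]) (by simp [hw])
  have hdiff : Pv₀ - Pv₁ = w ⨯₃ Γt + Δt • (ξ ⨯₃ (A + B)) := by
    rw [hPv₀, hPv₁, dplus_sub_dminus, ← hAB, sub_sub_cancel]
  have hdiff₂ := congrFun hdiff 2
  simp only [Pi.sub_apply, Pi.add_apply, Pi.smul_apply, htorque, hgyro, smul_zero,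
    add_zero] at hdiff₂
  exact (sub_eq_zero.mp hdiff₂).symm

/-- For a symmetric heavy top (`𝕀 = diag(I₁, I₁, I₃)`, displacement `a = (0,0,a₃)` along
the third body axis), one step of the deterministic heavy-top midpoint integrator exactly
conserves the third component of the body angular momentum. -/
theorem symmetric_heavy_top_conserves_third_momentum
    (I₁ I₃ : ℝ) (hI₁ : 0 < I₁) (hI₃ : 0 < I₃) (a₃ : ℝ)
    (Δt : ℝ) (hΔt : 0 < Δt) (m g : ℝ) (Γ₀ A B : Fin 3 → ℝ)
    (ξ w Γt Pv₀ Pv₁ : Fin 3 → ℝ)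
    (hξ : ξ = (1 / 2 : ℝ) • (Matrix.diagonal ![I₁, I₁, I₃])⁻¹.mulVec ((1 / 2 : ℝ) • (A + B)))
    (hw : w = (Δt * m * g) • (![0, 0, a₃] : Fin 3 → ℝ))
    (hΓt : Γt = (cay (-Δt) ξ).mulVec Γ₀)
    (hAB : dminus Δt ξ A - w ⨯₃ Γt = dplus Δt ξ B)
    (hPv₀ : Pv₀ = dplus Δt ξ A)
    (hPv₁ : Pv₁ = dminus Δt ξ B) :
    Pv₁ 2 = Pv₀ 2 :=
  symmetric_heavy_top_conserves_third_momentum_general I₁ I₃ hI₁ hI₃ a₃ Δt m g A B ξ w Γt Pv₀ Pv₁ hξ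
    hw hAB hPv₀ hPv₁
end
end
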